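/- Let A be an abelian group written multiplicatively, v, m ∈ A, and φ = p/q with p ∈ ℤ, q ≥ 1, gcd(p,q) = 1. On the Landau-gauge magnetic translation group U(1)⋉_φℤ², represent each U(1)-component by z ∈ [0,1) and define 𝔴(g₁,g₂) = v^{z₁ + z₂ + φ x₁ y₂ − z₁₂} · m^{x₁ y₂}, where z₁₂ ∈ [0,1) is the representative of the U(1)-component of g₁g₂ (so the exponent of v is an integer). Then (i) 𝔴 is an A-valued 2-cocycle on U(1)⋉_φℤ², and (ii) for the pure translations g₁ = (0,(q,0)) and g₂ = (0,(0,1)), which span a q×1 magnetic unit cell, one has 𝔴(g₁,g₂)·𝔴(g₂,g₁)^{-1} = v^p · m^q. -/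

import Mathlib

noncomputable section

/-- The underlying set `(ℝ/ℤ) × ℤ²` of the magnetic translation group. -/
abbrev MagTrans : Type := AddCircle (1 : ℝ) × (Fin 2 → ℤ)

/-- Landau-gauge magnetic translation multiplication with flux `φ` per unit cell:
`(z₁,r₁)·(z₂,r₂) = (z₁ + z₂ + φ x₁ y₂ mod 1, r₁ + r₂)`. -/
def magMulL (φ : ℝ) (g₁ g₂ : MagTrans) : MagTrans :=
  (g₁.1 + g₂.1 + (↑(φ * (g₁.2 0 : ℝ) * (g₂.2 1 : ℝ)) : AddCircle (1 : ℝ)), g₁.2 + g₂.2)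

/-- The representative in `[0,1)` of an element of `ℝ/ℤ`. -/
def rep1 (z : AddCircle (1 : ℝ)) : ℝ :=
  haveI : Fact ((0 : ℝ) < 1) := ⟨one_pos⟩
  (AddCircle.equivIco 1 0 z : ℝ)

/-- The integer exponent of the vison `v` in the symmetry fractionalization cocycle. -/
def expV (φ : ℝ) (g₁ g₂ : MagTrans) : ℤ :=
  ⌊rep1 g₁.1 + rep1 g₂.1 + φ * (g₁.2 0 : ℝ) * (g₂.2 1 : ℝ)⌋

/-- The symmetry fractionalization cochain `𝔴(g₁,g₂) = v^{z₁+z₂+φx₁y₂−z₁₂} · m^{x₁y₂}`. -/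
def wVM {A : Type*} [CommGroup A] (v m : A) (φ : ℝ) (g₁ g₂ : MagTrans) : A :=
  v ^ expV φ g₁ g₂ * m ^ (g₁.2 0 * g₂.2 1)

/-! The exponent of `v` is the carry `⌊z₁ + z₂ + φ x₁ y₂⌋` of the addition in `ℝ/ℤ`, and the
exponent of `m` is the bilinear form `x₁ y₂`. Both are integer 2-cocycles: the carry because the
group law is associative, so its alternating sum telescopes to the difference of the two
representatives of the same triple product; the form because it is bilinear. Hence `𝔴`, their image
under `(a, b) ↦ v^a m^b`, is a cocycle. For the translations `(q,0)` and `(0,1)` the carry is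
`⌊(p/q)·q⌋ = p` one way round and `0` the other. -/

lemma rep1_coe (x : ℝ) : rep1 x = Int.fract x := by
  have : Fact ((0 : ℝ) < 1) := ⟨one_pos⟩
  have h := AddCircle.coe_equivIco_mk_apply (1 : ℝ) x
  rw [div_one, mul_one] at h
  exact h

lemma coe_rep1 (z : AddCircle (1 : ℝ)) : ((rep1 z : ℝ) : AddCircle (1 : ℝ)) = z := by
  have : Fact ((0 : ℝ) < 1) := ⟨one_pos⟩
  exact (AddCircle.equivIco 1 0).symm_apply_apply z

lemma rep1_zero : rep1 0 = 0 := by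
  simpa only [AddCircle.coe_zero, Int.fract_zero] using rep1_coe 0

lemma magMulL_fst (φ : ℝ) (g₁ g₂ : MagTrans) :
    (magMulL φ g₁ g₂).1 =
      ((rep1 g₁.1 + rep1 g₂.1 + φ * (g₁.2 0 : ℝ) * (g₂.2 1 : ℝ) : ℝ) : AddCircle (1 : ℝ)) := by
  rw [magMulL, AddCircle.coe_add, AddCircle.coe_add, coe_rep1, coe_rep1]

lemma magMulL_snd (φ : ℝ) (g₁ g₂ : MagTrans) : (magMulL φ g₁ g₂).2 = g₁.2 + g₂.2 := rfl

lemma magMulL_assoc (φ : ℝ) (g₁ g₂ g₃ : MagTrans) :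
    magMulL φ (magMulL φ g₁ g₂) g₃ = magMulL φ g₁ (magMulL φ g₂ g₃) := by
  simp only [magMulL, Prod.mk.injEq, Pi.add_apply, Int.cast_add, mul_add, add_mul,
    AddCircle.coe_add, add_assoc, and_true]
  abel

lemma expV_eq (φ : ℝ) (g₁ g₂ : MagTrans) :
    (expV φ g₁ g₂ : ℝ) =
      rep1 g₁.1 + rep1 g₂.1 + φ * (g₁.2 0 : ℝ) * (g₂.2 1 : ℝ) -
        rep1 (magMulL φ g₁ g₂).1 := by
  rw [magMulL_fst, rep1_coe, expV, Int.self_sub_fract]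

lemma expV_cocycle (φ : ℝ) (g₁ g₂ g₃ : MagTrans) :
    expV φ g₂ g₃ - expV φ (magMulL φ g₁ g₂) g₃ + expV φ g₁ (magMulL φ g₂ g₃) -
      expV φ g₁ g₂ = 0 := by
  suffices h : ((expV φ g₂ g₃ - expV φ (magMulL φ g₁ g₂) g₃ + expV φ g₁ (magMulL φ g₂ g₃) -
      expV φ g₁ g₂ : ℤ) : ℝ) = 0 by exact_mod_cast h
  push_cast
  simp only [expV_eq, magMulL_assoc, magMulL_snd, Pi.add_apply, Int.cast_add]
  ring

lemma expV_translations (φ : ℝ) (r s : Fin 2 → ℤ) :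
    expV φ (0, r) (0, s) = ⌊φ * (r 0 : ℝ) * (s 1 : ℝ)⌋ := by
  rw [expV, rep1_zero, zero_add, zero_add]

lemma zpow_mul_zpow_alternating {A : Type*} [CommGroup A] (v m : A) (a b c d e f g h : ℤ) :
    (v ^ a * m ^ e) * (v ^ b * m ^ f)⁻¹ * (v ^ c * m ^ g) * (v ^ d * m ^ h)⁻¹ =
      v ^ (a - b + c - d) * m ^ (e - f + g - h) := by
  simp only [zpow_sub, zpow_add, mul_inv]
  ac_rfl

theorem wVM_cocycle {A : Type*} [CommGroup A] (v m : A) (φ : ℝ) (g₁ g₂ g₃ : MagTrans) :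
    wVM v m φ g₂ g₃ * (wVM v m φ (magMulL φ g₁ g₂) g₃)⁻¹ * wVM v m φ g₁ (magMulL φ g₂ g₃) *
      (wVM v m φ g₁ g₂)⁻¹ = 1 := by
  have bilinear_cocycle : g₂.2 0 * g₃.2 1 - (g₁.2 0 + g₂.2 0) * g₃.2 1 +
      g₁.2 0 * (g₂.2 1 + g₃.2 1) - g₁.2 0 * g₂.2 1 = 0 := by ring
  simp only [wVM, zpow_mul_zpow_alternating, expV_cocycle, magMulL_snd, Pi.add_apply,
    bilinear_cocycle, zpow_zero, mul_one]

theorem magnetic_unit_cell_anyon_general {A : Type*} [CommGroup A] (v m : A) (p : ℤ) (q : ℕ)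
    (hq : 1 ≤ q) :
    (∀ g₁ g₂ : MagTrans,
      (expV ((p : ℝ) / (q : ℝ)) g₁ g₂ : ℝ) =
        rep1 g₁.1 + rep1 g₂.1 + (p : ℝ) / (q : ℝ) * (g₁.2 0 : ℝ) * (g₂.2 1 : ℝ) -
          rep1 (magMulL ((p : ℝ) / (q : ℝ)) g₁ g₂).1) ∧
    (∀ g₁ g₂ g₃ : MagTrans,
      wVM v m ((p : ℝ) / (q : ℝ)) g₂ g₃ *
          (wVM v m ((p : ℝ) / (q : ℝ)) (magMulL ((p : ℝ) / (q : ℝ)) g₁ g₂) g₃)⁻¹ *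
          wVM v m ((p : ℝ) / (q : ℝ)) g₁ (magMulL ((p : ℝ) / (q : ℝ)) g₂ g₃) *
          (wVM v m ((p : ℝ) / (q : ℝ)) g₁ g₂)⁻¹ = 1) ∧
    (wVM v m ((p : ℝ) / (q : ℝ)) (0, ![(q : ℤ), 0]) (0, ![0, 1]) *
        (wVM v m ((p : ℝ) / (q : ℝ)) (0, ![0, 1]) (0, ![(q : ℤ), 0]))⁻¹ =
      v ^ p * m ^ (q : ℤ)) := by
  refine ⟨expV_eq _, wVM_cocycle v m _, ?_⟩
  have hq₀ : (q : ℝ) ≠ 0 := by positivity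
  have flux_through_cell : ⌊(p : ℝ) / q * ((q : ℤ) : ℝ) * ((1 : ℤ) : ℝ)⌋ = p := by
    rw [Int.cast_natCast, Int.cast_one, mul_one, div_mul_cancel₀ _ hq₀, Int.floor_intCast]
  simp only [wVM, expV_translations, Matrix.cons_val_zero, Matrix.cons_val_one,
    flux_through_cell]
  simp

/-- For flux `φ = p/q`, the exponent of `v` is the integer
`z₁ + z₂ + φ x₁ y₂ − z₁₂`, `𝔴` is an `A`-valued 2-cocycle, and for the pure translations
`(q,0)` and `(0,1)` spanning a `q×1` magnetic unit cell,
`𝔴(g₁,g₂)·𝔴(g₂,g₁)⁻¹ = v^p · m^q`. -/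
theorem magnetic_unit_cell_anyon {A : Type*} [CommGroup A] (v m : A) (p : ℤ) (q : ℕ)
    (hq : 1 ≤ q) (hpq : Int.gcd p (q : ℤ) = 1) :
    (∀ g₁ g₂ : MagTrans,
      (expV ((p : ℝ) / (q : ℝ)) g₁ g₂ : ℝ) =
        rep1 g₁.1 + rep1 g₂.1 + (p : ℝ) / (q : ℝ) * (g₁.2 0 : ℝ) * (g₂.2 1 : ℝ) -
          rep1 (magMulL ((p : ℝ) / (q : ℝ)) g₁ g₂).1) ∧
    (∀ g₁ g₂ g₃ : MagTrans,
      wVM v m ((p : ℝ) / (q : ℝ)) g₂ g₃ *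
          (wVM v m ((p : ℝ) / (q : ℝ)) (magMulL ((p : ℝ) / (q : ℝ)) g₁ g₂) g₃)⁻¹ *
          wVM v m ((p : ℝ) / (q : ℝ)) g₁ (magMulL ((p : ℝ) / (q : ℝ)) g₂ g₃) *
          (wVM v m ((p : ℝ) / (q : ℝ)) g₁ g₂)⁻¹ = 1) ∧
    (wVM v m ((p : ℝ) / (q : ℝ)) (0, ![(q : ℤ), 0]) (0, ![0, 1]) *
        (wVM v m ((p : ℝ) / (q : ℝ)) (0, ![0, 1]) (0, ![(q : ℤ), 0]))⁻¹ =
      v ^ p * m ^ (q : ℤ)) :=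
  magnetic_unit_cell_anyon_general v m p q hq
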